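/- arXiv:2204.01073 — 2 statements merged into one kernel-verified Lean document; each statement's English description precedes it below -/
import Mathlib

section
/- Let π₁: X₁ → B₁ be a map of metric spaces, Y a geodesic metric space, and suppose we have maps f: X₁ → X, f^Y: Y → X, π₂: Y → B₁ with f' : Y → X₁ satisfying f ∘ f' = f^Y and π₁ ∘ f' = π₂. Assume: (1) f, f^Y, π₂ are coarsely L-Lipschitz; (2) for all b, b' ∈ B₁ and N ≥ 0, d_{B₁}(b,b') ≤ N implies the Hausdorff distance between π₁⁻¹(b) and π₁⁻¹(b') is at most φ₁(N); (3) the restrictions of f to the fibers of π₁ are uniformly properly embedded as measured by φ₂. Then there is a function φ depending only on L, φ₁, φ₂ such that d_Y(y, y') ≤ R implies d_{X₁}(f'(y), f'(y')) ≤ φ(R); in particular f' is coarsely φ(1)-Lipschitz. -/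
open Set

/-!
Move `f' y` inside `X₁` to a point `x'` of the fibre through `f' y'`: since `π₂` is coarsely
Lipschitz the two base points are close, so the fibre Hausdorff bound `φ₁` makes `x'` close to
`f' y`. As `f` and `f^Y = f ∘ f'` are coarsely Lipschitz, `f x'` is close to `f (f' y')`, and the
uniform properness `φ₂` of `f` on that fibre bounds `d(x', f' y')`. The triangle inequality
finishes.
-/

def CoarselyLipschitzWith {α β : Type*} [PseudoMetricSpace α] [PseudoMetricSpace β]
    (L : ℝ) (g : α → β) : Prop :=
  ∀ x y : α, dist (g x) (g y) ≤ L * dist x y + L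

def IsGeodesicSpace (Z : Type*) [MetricSpace Z] : Prop :=
  ∀ x y : Z, ∃ γ : ℝ → Z, γ 0 = x ∧ γ (dist x y) = y ∧
    ∀ s ∈ Icc (0 : ℝ) (dist x y), ∀ t ∈ Icc (0 : ℝ) (dist x y),
      dist (γ s) (γ t) = |s - t|

section CoarselyLipschitz

variable {α β : Type*} [PseudoMetricSpace α] [PseudoMetricSpace β] {L : ℝ} {g : α → β}

theorem CoarselyLipschitzWith.nonneg (hg : CoarselyLipschitzWith L g) (x : α) : 0 ≤ L := by
  simpa using hg x x

theorem CoarselyLipschitzWith.dist_le_of_dist_le (hg : CoarselyLipschitzWith L g) {x y : α}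
    {R : ℝ} (hxy : dist x y ≤ R) : dist (g x) (g y) ≤ L * R + L := by
  have := mul_le_mul_of_nonneg_left hxy (hg.nonneg x)
  linarith [hg x y]

end CoarselyLipschitz

section FiberBundle

variable {X₁ X B : Type*} [PseudoMetricSpace X₁] [PseudoMetricSpace X] [PseudoMetricSpace B]

def FibersHausdorffBoundedBy (π : X₁ → B) (φ : ℝ → ℝ) : Prop :=
  ∀ (b b' : B) (N : ℝ), 0 ≤ N → dist b b' ≤ N →
    ∀ x : X₁, π x = b → ∃ x' : X₁, π x' = b' ∧ dist x x' ≤ φ N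

def UniformlyProperOnFibers (π : X₁ → B) (f : X₁ → X) (φ : ℝ → ℝ) : Prop :=
  ∀ (b : B) (x x' : X₁), π x = b → π x' = b → ∀ N : ℝ, 0 ≤ N →
    dist (f x) (f x') ≤ N → dist x x' ≤ φ N

theorem dist_le_of_dist_base_le_of_dist_image_le {π : X₁ → B} {f : X₁ → X} {L : ℝ}
    {φ₁ φ₂ : ℝ → ℝ} (hf : CoarselyLipschitzWith L f) (hπ : FibersHausdorffBoundedBy π φ₁)
    (hfπ : UniformlyProperOnFibers π f φ₂) {x z : X₁} {N K : ℝ} (hN : 0 ≤ N)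
    (hbase : dist (π x) (π z) ≤ N) (himage : dist (f x) (f z) ≤ K) :
    dist x z ≤ φ₁ N + φ₂ (L * φ₁ N + L + K) := by
  obtain ⟨x', hx'z, hxx'⟩ := hπ _ _ N hN hbase x rfl
  have hfx' : dist (f x') (f z) ≤ L * φ₁ N + L + K :=
    calc dist (f x') (f z) ≤ dist (f x') (f x) + dist (f x) (f z) := dist_triangle _ _ _
      _ ≤ L * φ₁ N + L + K :=
        add_le_add (hf.dist_le_of_dist_le (dist_comm x' x ▸ hxx')) himage
  have hx'z' : dist x' z ≤ φ₂ (L * φ₁ N + L + K) :=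
    hfπ (π z) x' z hx'z rfl _ (dist_nonneg.trans hfx') hfx'
  calc dist x z ≤ dist x x' + dist x' z := dist_triangle _ _ _
    _ ≤ φ₁ N + φ₂ (L * φ₁ N + L + K) := add_le_add hxx' hx'z'

end FiberBundle

/-- **Pullback maps are coarsely Lipschitz.**
Given `L ≥ 0` and `φ₁, φ₂`, there is `φ` such that the following holds.  Suppose
`π₁ : X₁ → B₁`, and maps `f : X₁ → X`, `f^Y : Y → X`, `π₂ : Y → B₁`,
`f' : Y → X₁` satisfy `f ∘ f' = f^Y` and `π₁ ∘ f' = π₂`, where (1) `f, f^Y, π₂` are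
coarsely `L`-Lipschitz, (2) fibers of `π₁` over points at distance `≤ N` in `B₁` are
at Hausdorff distance `≤ φ₁ N`, and (3) the restrictions of `f` to the fibers of
`π₁` are uniformly properly embedded as measured by `φ₂`.  Then
`d_Y(y,y') ≤ R` implies `d_{X₁}(f' y, f' y') ≤ φ R`; in particular `f'` is coarsely
`φ 1`-Lipschitz. -/
theorem pullback_map_coarsely_lipschitz (L : ℝ) (φ₁ φ₂ : ℝ → ℝ) :
    ∃ φ : ℝ → ℝ,
      ∀ (X₁ X B₁ Y : Type*) [MetricSpace X₁] [MetricSpace X] [MetricSpace B₁]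
        [MetricSpace Y],
        IsGeodesicSpace Y →
        ∀ (π₁ : X₁ → B₁) (f : X₁ → X) (fY : Y → X) (π₂ : Y → B₁) (f' : Y → X₁),
        (∀ y : Y, f (f' y) = fY y) → (∀ y : Y, π₁ (f' y) = π₂ y) →
        CoarselyLipschitzWith L f → CoarselyLipschitzWith L fY →
        CoarselyLipschitzWith L π₂ →
        (∀ (b b' : B₁) (N : ℝ), 0 ≤ N → dist b b' ≤ N →
          ∀ x : X₁, π₁ x = b → ∃ x' : X₁, π₁ x' = b' ∧ dist x x' ≤ φ₁ N) →
        (∀ (b : B₁) (x x' : X₁), π₁ x = b → π₁ x' = b → ∀ N : ℝ, 0 ≤ N →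
          dist (f x) (f x') ≤ N → dist x x' ≤ φ₂ N) →
        ∀ (y y' : Y) (R : ℝ), 0 ≤ R → dist y y' ≤ R →
          dist (f' y) (f' y') ≤ φ R := by
  refine ⟨fun R => φ₁ (L * R + L) + φ₂ (L * φ₁ (L * R + L) + L + (L * R + L)), ?_⟩
  intro X₁ X B₁ Y _ _ _ _ _ π₁ f fY π₂ f' hfY_eq hπ₂_eq hf hfY hπ₂ hHaus hproper y y' R hR hyy'
  have hL : 0 ≤ L := hπ₂.nonneg y
  have hbase : dist (π₁ (f' y)) (π₁ (f' y')) ≤ L * R + L := by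
    simpa only [hπ₂_eq] using hπ₂.dist_le_of_dist_le hyy'
  have himage : dist (f (f' y)) (f (f' y')) ≤ L * R + L := by
    simpa only [hfY_eq] using hfY.dist_le_of_dist_le hyy'
  exact dist_le_of_dist_base_le_of_dist_image_le hf hHaus hproper
    (add_nonneg (mul_nonneg hL hR) hL) hbase himage
end

section
/- Let π: X̂ → B be a metric graph bundle, Σ₁ and Σ₂ two K-qi sections, and L(Σ₁, Σ₂) the ladder formed by choosing, for each vertex b of B, a fiber geodesic λ_b in F_b joining Σ₁ ∩ F_b to Σ₂ ∩ F_b. Suppose each fiber F_b is δ'-hyperbolic and the bundle satisfies bounded flaring. Define Π: X̂ → L(Σ₁,Σ₂) by sending x ∈ F_b to a nearest-point projection of x to λ_b in F_b. Then Π is a coarse C-Lipschitz retraction for a constant C depending only on K, δ', and the bundle parameters: d(Π(x), Π(y)) ≤ C·d(x,y) + C for all x, y ∈ X̂, and Π restricts to the identity coarse-up-to-bounded-error on the ladder. -/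
open SimpleGraph
open scoped Classical

/-- The induced path metric on the fiber over `b` of a graph map. -/
noncomputable def fiberDist {V W : Type*} (X : SimpleGraph V) (π : V → W) (b : W)
    (x y : V) : ℕ :=
  if h : π x = b ∧ π y = b then (X.induce (π ⁻¹' {b})).dist ⟨x, h.1⟩ ⟨y, h.2⟩ else 0

/-- `ℓ` is a `k`-qi lift of the discrete path `γ` in the base. -/
def IsQILift {V W : Type*} (X : SimpleGraph V) (π : V → W) (k : ℕ) {n : ℕ}
    (γ : Fin (n + 1) → W) (ℓ : Fin (n + 1) → V) : Prop :=
  (∀ i, π (ℓ i) = γ i) ∧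
  ∀ i j : Fin (n + 1),
    X.dist (ℓ i) (ℓ j) ≤ k * (((i : ℕ) : ℤ) - ((j : ℕ) : ℤ)).natAbs + k ∧
    ((((i : ℕ) : ℤ) - ((j : ℕ) : ℤ)).natAbs : ℕ) ≤ k * X.dist (ℓ i) (ℓ j) + k

/-- `γ` is a discrete geodesic in `B`. -/
def IsDiscreteGeodesic {W : Type*} (B : SimpleGraph W) {n : ℕ}
    (γ : Fin (n + 1) → W) : Prop :=
  ∀ i j : Fin (n + 1), B.dist (γ i) (γ j) = (((i : ℕ) : ℤ) - ((j : ℕ) : ℤ)).natAbs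


namespace LadderAux


structure CoarseGeo {α : Type*} (d : α → α → ℕ) (δ' : ℝ) : Prop where
  refl : ∀ a, d a a = 0
  symm : ∀ a b, d a b = d b a
  tri : ∀ a b c, d a c ≤ d a b + d b c
  four : ∀ a b c e, (d a b + d c e : ℝ) ≤
    max (d a c + d b e : ℝ) (d a e + d b c : ℝ) + 2 * δ'

/-- `g` restricted to `[0,n]` is a geodesic for `d`. -/
def IsGeo {α : Type*} (d : α → α → ℕ) (n : ℕ) (g : ℕ → α) : Prop :=
  ∀ i j, i ≤ j → j ≤ n → d (g i) (g j) = j - i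

noncomputable def cproj (δ' : ℝ) : ℕ := ⌈(4:ℝ) * δ'⌉₊ + 1

noncomputable def C0 (δ' : ℝ) : ℕ := 2 * cproj δ' + ⌈(2:ℝ) * δ'⌉₊

variable {α : Type*} {d : α → α → ℕ} {δ' : ℝ}

lemma proj_taut_aux (H : CoarseGeo d δ') (hδ' : 0 ≤ δ') {n : ℕ} {g : ℕ → α}
    (hg : IsGeo d n g) (x : α) (i₀ : ℕ)
    (hmin : ∀ j ≤ n, d x (g i₀) ≤ d x (g j)) {j : ℕ} (hij : i₀ ≤ j) (hj : j ≤ n) :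
    d x (g i₀) + (j - i₀) ≤ d x (g j) + cproj δ' := by
  set e₀ : ℕ := ⌊(2:ℝ) * δ'⌋₊ + 1 with he₀
  have hfloor : (⌊(2:ℝ) * δ'⌋₊ : ℝ) ≤ 2 * δ' := Nat.floor_le (by linarith)
  have hceil : (4:ℝ) * δ' ≤ (⌈(4:ℝ) * δ'⌉₊ : ℝ) := Nat.le_ceil _
  have hfc : ⌊(2:ℝ) * δ'⌋₊ ≤ ⌈(4:ℝ) * δ'⌉₊ := by
    have : (⌊(2:ℝ) * δ'⌋₊ : ℝ) ≤ (⌈(4:ℝ) * δ'⌉₊ : ℝ) := by linarith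
    exact_mod_cast this
  by_cases hsmall : j < i₀ + e₀
  · have h1 := hmin j hj
    have : j - i₀ ≤ cproj δ' := by
      unfold cproj; omega
    omega
  · push_neg at hsmall
    have hm : i₀ + e₀ ≤ n := le_trans hsmall hj
    have h4 := H.four x (g (i₀ + e₀)) (g i₀) (g j)
    have d1 : d (g i₀) (g j) = j - i₀ := hg i₀ j hij hj
    have d2 : d (g (i₀ + e₀)) (g j) = j - (i₀ + e₀) := hg _ j hsmall hj
    have d3 : d (g (i₀ + e₀)) (g i₀) = e₀ := by
      rw [H.symm]; have := hg i₀ (i₀ + e₀) (Nat.le_add_right _ _) hm; omega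
    have d4 : d x (g i₀) ≤ d x (g (i₀ + e₀)) := hmin _ hm
    rw [d1, d2, d3] at h4
    rcases le_or_gt ((d x (g j) : ℝ) + e₀) ((d x (g i₀) : ℝ) + (j - (i₀ + e₀) : ℕ)) with hc | hc
    · rw [max_eq_left hc] at h4
      exfalso
      have hcast : ((j - (i₀ + e₀) : ℕ) : ℝ) = (j : ℝ) - i₀ - e₀ := by
        push_cast [Nat.cast_sub hsmall]; ring
      have hcast2 : ((j - i₀ : ℕ) : ℝ) = (j : ℝ) - i₀ := by
        push_cast [Nat.cast_sub hij]; ring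
      have hd4 : (d x (g i₀) : ℝ) ≤ (d x (g (i₀ + e₀)) : ℝ) := by exact_mod_cast d4
      have he₀' : (2:ℝ) * δ' < (e₀ : ℝ) := by
        rw [he₀]; push_cast; exact Nat.lt_floor_add_one _
      rw [hcast, hcast2] at h4
      linarith
    · rw [max_eq_right hc.le] at h4
      have hcast2 : ((j - i₀ : ℕ) : ℝ) = (j : ℝ) - i₀ := by
        push_cast [Nat.cast_sub hij]; ring
      have hd4 : (d x (g i₀) : ℝ) ≤ (d x (g (i₀ + e₀)) : ℝ) := by exact_mod_cast d4
      have hfin : (d x (g i₀) : ℝ) + ((j - i₀ : ℕ) : ℝ) ≤ (d x (g j) : ℝ) + cproj δ' := by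
        have hcp : (e₀ : ℝ) + 2 * δ' ≤ (cproj δ' : ℝ) := by
          unfold cproj; rw [he₀]; push_cast; linarith
        rw [hcast2] at h4 ⊢
        linarith
      exact_mod_cast hfin

lemma IsGeo.rev {n : ℕ} {g : ℕ → α} (H : CoarseGeo d δ') (hg : IsGeo d n g) :
    IsGeo d n (fun i => g (n - i)) := by
  intro i j hij hj
  simp only
  rw [H.symm]
  have := hg (n - j) (n - i) (by omega) (by omega)
  omega

/-- Key projection lemma: the projection point is "taut" towards any point of the
geodesic. -/
lemma proj_taut (H : CoarseGeo d δ') (hδ' : 0 ≤ δ') {n : ℕ} {g : ℕ → α}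
    (hg : IsGeo d n g) (x : α) (i₀ : ℕ) (hi₀ : i₀ ≤ n)
    (hmin : ∀ j ≤ n, d x (g i₀) ≤ d x (g j)) {j : ℕ} (hj : j ≤ n) :
    d x (g i₀) + d (g i₀) (g j) ≤ d x (g j) + cproj δ' := by
  rcases le_or_gt i₀ j with hij | hij
  · rw [hg i₀ j hij hj]
    exact proj_taut_aux H hδ' hg x i₀ hmin hij hj
  · have hrev := proj_taut_aux H hδ' (hg.rev H) x (n - i₀)
      (fun j' hj' => by
        show d x (g (n - (n - i₀))) ≤ d x (g (n - j'))
        rw [show n - (n - i₀) = i₀ by omega]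
        exact hmin (n - j') (by omega))
      (j := n - j) (by omega) (by omega)
    simp only [show n - (n - i₀) = i₀ by omega, show n - (n - j) = j by omega] at hrev
    have : d (g i₀) (g j) = i₀ - j := by rw [H.symm]; exact hg j i₀ hij.le hi₀
    omega

/-- Projections of nearby points are close. -/
lemma proj_lipschitz (H : CoarseGeo d δ') (hδ' : 0 ≤ δ') {n : ℕ} {g : ℕ → α}
    (hg : IsGeo d n g) (x y : α) (i₀ j₀ : ℕ) (hi₀ : i₀ ≤ n) (hj₀ : j₀ ≤ n)
    (hminx : ∀ j ≤ n, d x (g i₀) ≤ d x (g j))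
    (hminy : ∀ j ≤ n, d y (g j₀) ≤ d y (g j)) :
    d (g i₀) (g j₀) ≤ 2 * d x y + cproj δ' := by
  have h1 := proj_taut H hδ' hg x i₀ hi₀ hminx hj₀
  have h2 : d x (g j₀) ≤ d x y + d y (g j₀) := H.tri _ _ _
  have h3 : d y (g j₀) ≤ d y (g i₀) := hminy _ hi₀
  have h4 : d y (g i₀) ≤ d y x + d x (g i₀) := H.tri _ _ _
  have h5 : d y x = d x y := H.symm _ _
  omega

/-- Contraction: if two points are no further apart than the sum of their distances
to the geodesic, their projections are uniformly close. -/
lemma proj_contract (H : CoarseGeo d δ') (hδ' : 0 ≤ δ') {n : ℕ} {g : ℕ → α}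
    (hg : IsGeo d n g) (x y : α) (i₀ j₀ : ℕ) (hi₀ : i₀ ≤ n) (hj₀ : j₀ ≤ n)
    (hminx : ∀ j ≤ n, d x (g i₀) ≤ d x (g j))
    (hminy : ∀ j ≤ n, d y (g j₀) ≤ d y (g j))
    (hxy : d x y ≤ d x (g i₀) + d y (g j₀)) :
    d (g i₀) (g j₀) ≤ C0 δ' := by
  set p := g i₀; set q := g j₀
  have hx := proj_taut H hδ' hg x i₀ hi₀ hminx hj₀
  have hy := proj_taut H hδ' hg y j₀ hj₀ hminy hi₀
  have h4 := H.four p y x q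
  have hs1 : d p y = d y p := H.symm _ _
  have hs2 : d p x = d x p := H.symm _ _
  have hs3 : d y x = d x y := H.symm _ _
  have hs4 : d q p = d p q := H.symm _ _
  rw [hs1, hs2, hs3] at h4
  rw [hs4] at hy
  have hreal : (d p q : ℝ) ≤ 2 * cproj δ' + 2 * δ' := by
    have hx' : (d x p : ℝ) + d p q ≤ (d x q : ℝ) + cproj δ' := by exact_mod_cast hx
    have hy' : (d y q : ℝ) + d p q ≤ (d y p : ℝ) + cproj δ' := by exact_mod_cast hy
    have hxy' : (d x y : ℝ) ≤ (d x p : ℝ) + d y q := by exact_mod_cast hxy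
    rcases le_or_gt ((d x p : ℝ) + d y q) ((d p q : ℝ) + d x y) with hc | hc
    · rw [max_eq_right hc] at h4; linarith
    · rw [max_eq_left hc.le] at h4; linarith
  have : (d p q : ℝ) ≤ (2 * cproj δ' : ℕ) + ((⌈(2:ℝ) * δ'⌉₊ : ℕ) : ℝ) := by
    have := Nat.le_ceil ((2:ℝ) * δ')
    push_cast; push_cast at hreal; linarith
  have : (d p q : ℝ) ≤ ((C0 δ' : ℕ) : ℝ) := by unfold C0; push_cast; push_cast at this; linarith
  exact_mod_cast this

lemma chain_bound (w : ℕ → α) (m c : ℕ) (H : CoarseGeo d δ')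
    (h : ∀ i < m, d (w i) (w (i + 1)) ≤ c) : d (w 0) (w m) ≤ c * m := by
  induction m with
  | zero => simp [H.refl]
  | succ k ih =>
    have := H.tri (w 0) (w k) (w (k + 1))
    have h1 := ih (fun i hi => h i (by omega))
    have h2 := h k (by omega)
    calc d (w 0) (w (k+1)) ≤ d (w 0) (w k) + d (w k) (w (k+1)) := this
    _ ≤ c * k + c := by omega
    _ = c * (k + 1) := by ring


noncomputable def F0m (δ' : ℝ) (s μ e : ℕ) : ℕ := s * (2 * μ * (C0 δ' + 1) + 1) + e + 2 * s
noncomputable def T0m (δ' : ℝ) (s μ e : ℕ) : ℕ := 2 * μ * (2 * F0m δ' s μ e + C0 δ' + 1)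
noncomputable def Rm (δ' : ℝ) (s μ e : ℕ) : ℕ := F0m δ' s μ e + s * (T0m δ' s μ e + 3)
noncomputable def Rcr1 (δ' : ℝ) (μ₁ : ℕ) : ℕ := Rm δ' μ₁ (μ₁ + cproj δ') 0
noncomputable def Rcr2 (δ' : ℝ) (μ₁ e : ℕ) : ℕ := Rm δ' μ₁ μ₁ e
noncomputable def Mcr (δ' : ℝ) (μ₁ e e2 : ℕ) : ℕ :=
  Rcr2 δ' μ₁ e + Rcr1 δ' μ₁ + e2 + e + cproj δ'
noncomputable def mu1 (μ : ℕ → ℕ → ℕ) : ℕ := max (μ 1 1) 1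
noncomputable def Cfin (K : ℕ) (δ' : ℝ) (μ : ℕ → ℕ → ℕ) (η : ℕ → ℕ) : ℕ :=
  Mcr δ' (mu1 μ) (η (2 * K + 1)) (η 2) + Rcr2 δ' (mu1 μ) (η (2 * K + 1)) +
    2 * η 1 + cproj δ' + 2

variable {V W : Type*}
/-- Stability of discrete quasigeodesics relative to a geodesic with nearby
endpoints. -/
lemma morse (H : CoarseGeo d δ') (hδ' : 0 ≤ δ') {n : ℕ} {g : ℕ → α}
    (hg : IsGeo d n g) (σ : ℕ → α) (N s μ e : ℕ) (hs : 1 ≤ s) (hμ : 1 ≤ μ)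
    (pr : ℕ → ℕ) (hprle : ∀ t, pr t ≤ n)
    (hprmin : ∀ t, ∀ j ≤ n, d (σ t) (g (pr t)) ≤ d (σ t) (g j))
    (hstep : ∀ t < N, d (σ t) (σ (t + 1)) ≤ s)
    (hlow : ∀ t t', t ≤ t' → t' ≤ N → t' - t ≤ μ * d (σ t) (σ t') + μ)
    (he0 : d (σ 0) (g 0) ≤ e) (heN : d (σ N) (g n) ≤ e) :
    ∀ t ≤ N, d (σ t) (g (pr t)) ≤ Rm δ' s μ e := by
  classical
  have hF0eq : F0m δ' s μ e = s * (2 * μ * (C0 δ' + 1) + 1) + e + 2 * s := rfl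
  have hT0eq : T0m δ' s μ e = 2 * μ * (2 * F0m δ' s μ e + C0 δ' + 1) := rfl
  have hRmeq : Rm δ' s μ e = F0m δ' s μ e + s * (T0m δ' s μ e + 3) := rfl
  set c := C0 δ' with hcdef
  set F0 := F0m δ' s μ e with hF0def
  set T0 := T0m δ' s μ e with hT0def
  have he_le_F0 : e ≤ F0 := by rw [hF0eq]; omega
  have h2s_le_F0 : 2 * s ≤ F0 := by rw [hF0eq]; omega
  have hpath : ∀ u v, u ≤ v → v ≤ N → d (σ u) (σ v) ≤ s * (v - u) := by
    intro u v huv hv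
    induction v, huv using Nat.le_induction with
    | base => simp [H.refl]
    | succ v hv' ih =>
      have h1 := ih (by omega)
      have h2 := hstep v (by omega)
      have h3 := H.tri (σ u) (σ v) (σ (v + 1))
      have h4 : s * (v + 1 - u) = s * (v - u) + s := by
        rw [show v + 1 - u = (v - u) + 1 by omega]; ring
      omega
  have hf0 : d (σ 0) (g (pr 0)) ≤ e := le_trans (hprmin 0 0 (Nat.zero_le n)) he0
  have hfN : d (σ N) (g (pr N)) ≤ e := le_trans (hprmin N n le_rfl) heN
  have hslope : ∀ u v, u ≤ v → v ≤ N →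
      d (σ v) (g (pr v)) ≤ d (σ u) (g (pr u)) + s * (v - u) ∧
      d (σ u) (g (pr u)) ≤ d (σ v) (g (pr v)) + s * (v - u) := by
    intro u v huv hv
    have h4 := hpath u v huv hv
    constructor
    · have h1 : d (σ v) (g (pr v)) ≤ d (σ v) (g (pr u)) := hprmin v (pr u) (hprle u)
      have h2 : d (σ v) (g (pr u)) ≤ d (σ v) (σ u) + d (σ u) (g (pr u)) := H.tri _ _ _
      have h3 : d (σ v) (σ u) = d (σ u) (σ v) := H.symm _ _
      omega
    · have h1 : d (σ u) (g (pr u)) ≤ d (σ u) (g (pr v)) := hprmin u (pr v) (hprle v)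
      have h2 : d (σ u) (g (pr v)) ≤ d (σ u) (σ v) + d (σ v) (g (pr v)) := H.tri _ _ _
      omega
  by_contra hcon
  push_neg at hcon
  obtain ⟨ts, htsN, hbig⟩ := hcon
  rw [hRmeq] at hbig
  -- extract t₁
  obtain ⟨t₁, ht₁ts, hft₁, hmax1⟩ :
      ∃ t₁, t₁ ≤ ts ∧ d (σ t₁) (g (pr t₁)) ≤ F0 ∧
        ∀ t, t₁ < t → t ≤ ts → F0 < d (σ t) (g (pr t)) := by
    have hne : ((Finset.range (ts + 1)).filter
        (fun t => d (σ t) (g (pr t)) ≤ F0)).Nonempty :=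
      ⟨0, Finset.mem_filter.mpr ⟨Finset.mem_range.mpr (by omega), by omega⟩⟩
    refine ⟨((Finset.range (ts + 1)).filter
        (fun t => d (σ t) (g (pr t)) ≤ F0)).max' hne, ?_, ?_, ?_⟩
    · have h := Finset.max'_mem _ hne
      rw [Finset.mem_filter, Finset.mem_range] at h; omega
    · have h := Finset.max'_mem _ hne
      rw [Finset.mem_filter] at h; exact h.2
    · intro t h1 h2
      by_contra hle
      push_neg at hle
      have hmem : t ∈ (Finset.range (ts + 1)).filter
          (fun t => d (σ t) (g (pr t)) ≤ F0) :=
        Finset.mem_filter.mpr ⟨Finset.mem_range.mpr (by omega), hle⟩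
      have := Finset.le_max' _ t hmem; omega
  -- extract t₂
  obtain ⟨t₂, hts₂, ht₂N, hft₂, hmin2⟩ :
      ∃ t₂, ts ≤ t₂ ∧ t₂ ≤ N ∧ d (σ t₂) (g (pr t₂)) ≤ F0 ∧
        ∀ t, ts ≤ t → t < t₂ → F0 < d (σ t) (g (pr t)) := by
    have hne : ((Finset.Icc ts N).filter
        (fun t => d (σ t) (g (pr t)) ≤ F0)).Nonempty :=
      ⟨N, Finset.mem_filter.mpr ⟨Finset.mem_Icc.mpr ⟨htsN, le_rfl⟩, by omega⟩⟩
    have hmm := Finset.min'_mem _ hne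
    rw [Finset.mem_filter, Finset.mem_Icc] at hmm
    refine ⟨((Finset.Icc ts N).filter
        (fun t => d (σ t) (g (pr t)) ≤ F0)).min' hne, hmm.1.1, hmm.1.2, hmm.2, ?_⟩
    intro t h1 h2
    by_contra hle
    push_neg at hle
    have hmem : t ∈ (Finset.Icc ts N).filter
        (fun t => d (σ t) (g (pr t)) ≤ F0) :=
      Finset.mem_filter.mpr ⟨Finset.mem_Icc.mpr ⟨h1, by omega⟩, hle⟩
    have := Finset.min'_le _ t hmem; omega
  have ht₁lt : t₁ < ts := by
    rcases eq_or_lt_of_le ht₁ts with h | h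
    · exfalso; rw [h] at hft₁; omega
    · exact h
  have htlt₂ : ts < t₂ := by
    rcases eq_or_lt_of_le hts₂ with h | h
    · exfalso; rw [← h] at hft₂; omega
    · exact h
  have ht12 : t₁ ≤ t₂ := by omega
  -- T is large
  have hTbig : T0 + 3 < t₂ - t₁ := by
    have h1 := (hslope t₁ ts (by omega) (by omega)).1
    have h2 : s * (T0 + 3) < s * (ts - t₁) := by omega
    have h3 : T0 + 3 < ts - t₁ := lt_of_mul_lt_mul_left h2 (Nat.zero_le s)
    omega
  have hint : ∀ t, t₁ < t → t < t₂ → F0 < d (σ t) (g (pr t)) := by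
    intro t h1 h2
    rcases le_or_gt t ts with h | h
    · exact hmax1 t h1 h
    · exact hmin2 t (by omega) h2
  have hfl : ∀ t, t₁ ≤ t → t ≤ t₂ → F0 + 1 ≤ d (σ t) (g (pr t)) + s := by
    intro t h1 h2
    rcases Nat.lt_or_ge t₁ t with h1' | h1''
    · rcases Nat.lt_or_ge t t₂ with h2' | h2''
      · have := hint t h1' h2'; omega
      · have hte : t = t₂ := le_antisymm h2 h2''
        have h5 : F0 < d (σ (t₂ - 1)) (g (pr (t₂ - 1))) :=
          hint (t₂ - 1) (by omega) (by omega)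
        have h6 := (hslope (t₂ - 1) t₂ (by omega) (by omega)).2
        have h7 : s * (t₂ - (t₂ - 1)) = s * 1 := by rw [show t₂ - (t₂ - 1) = 1 by omega]
        have h8 : s * 1 = s := mul_one s
        rw [hte]
        omega
    · have hte : t = t₁ := le_antisymm h1'' h1
      have h5 : F0 < d (σ (t₁ + 1)) (g (pr (t₁ + 1))) :=
        hint (t₁ + 1) (by omega) (by omega)
      have h6 := (hslope t₁ (t₁ + 1) (by omega) (by omega)).1
      have h7 : s * (t₁ + 1 - t₁) = s * 1 := by rw [show t₁ + 1 - t₁ = 1 by omega]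
      have h8 : s * 1 = s := mul_one s
      rw [hte]
      omega
  obtain ⟨Δ, hΔdef⟩ : ∃ Δ, Δ = F0 / s := ⟨_, rfl⟩
  have hΔ1 : 2 * μ * (c + 1) + 1 ≤ Δ := by
    rw [hΔdef, Nat.le_div_iff_mul_le (by omega : 0 < s)]
    calc (2 * μ * (c + 1) + 1) * s = s * (2 * μ * (c + 1) + 1) := by ring
    _ ≤ F0 := by rw [hF0eq]; omega
  have hμc1 : 2 * μ * c + 1 ≤ Δ := by
    have h : 2 * μ * (c + 1) = 2 * μ * c + 2 * μ := by ring
    omega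
  have hΔpos : 0 < Δ := by omega
  have hsΔ : s * Δ ≤ F0 := by
    rw [hΔdef, mul_comm]; exact Nat.div_mul_le_self F0 s
  have hop : ∀ u v, t₁ ≤ u → u ≤ v → v ≤ t₂ → v - u ≤ Δ →
      d (g (pr u)) (g (pr v)) ≤ c := by
    intro u v h1 h2 h3 h4
    have hd : d (σ u) (σ v) ≤ s * (v - u) := hpath u v h2 (by omega)
    have hd2 : s * (v - u) ≤ s * Δ := Nat.mul_le_mul_left _ h4
    have hfu := hfl u h1 (by omega)
    have hfv := hfl v (by omega) h3
    have hsum : d (σ u) (σ v) ≤ d (σ u) (g (pr u)) + d (σ v) (g (pr v)) := by omega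
    exact proj_contract H hδ' hg (σ u) (σ v) (pr u) (pr v) (hprle u) (hprle v)
      (hprmin u) (hprmin v) hsum
  obtain ⟨Q, hQ⟩ : ∃ Q, Q = (t₂ - t₁) / Δ := ⟨_, rfl⟩
  obtain ⟨Q2, hQ2⟩ : ∃ Q2, Q2 = (t₂ - t₁) / (2 * μ * c + 1) := ⟨_, rfl⟩
  have hchain : d (g (pr t₁)) (g (pr t₂)) ≤ c * (Q + 1) := by
    have hend : min (t₁ + (Q + 1) * Δ) t₂ = t₂ := by
      have hdm := Nat.div_add_mod (t₂ - t₁) Δ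
      have hml := Nat.mod_lt (t₂ - t₁) hΔpos
      have hmul : (Q + 1) * Δ = Δ * ((t₂ - t₁) / Δ) + Δ := by rw [hQ]; ring
      omega
    have h0 : min (t₁ + 0 * Δ) t₂ = t₁ := by omega
    have hcb := chain_bound (fun i => g (pr (min (t₁ + i * Δ) t₂))) (Q + 1) c H ?_
    · have hcb' : d (g (pr (min (t₁ + 0 * Δ) t₂))) (g (pr (min (t₁ + (Q + 1) * Δ) t₂)))
          ≤ c * (Q + 1) := hcb
      rw [h0, hend] at hcb'; exact hcb'
    · intro i _
      show d (g (pr (min (t₁ + i * Δ) t₂))) (g (pr (min (t₁ + (i + 1) * Δ) t₂))) ≤ c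
      have hmul : (i + 1) * Δ = i * Δ + Δ := by ring
      apply hop
      · exact le_min (by omega) ht12
      · apply min_le_min _ le_rfl; omega
      · exact min_le_right _ _
      · omega
  have hbig1 : d (σ t₁) (σ t₂) ≤
      d (σ t₁) (g (pr t₁)) + c * (Q + 1) + d (σ t₂) (g (pr t₂)) := by
    have h1 := H.tri (σ t₁) (g (pr t₁)) (σ t₂)
    have h2 := H.tri (g (pr t₁)) (g (pr t₂)) (σ t₂)
    have h3 : d (g (pr t₂)) (σ t₂) = d (σ t₂) (g (pr t₂)) := H.symm _ _
    omega
  have hTle : t₂ - t₁ ≤ μ * d (σ t₁) (σ t₂) + μ := hlow t₁ t₂ ht12 ht₂N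
  have hq2 : Q ≤ Q2 := by
    rw [hQ, hQ2]
    exact Nat.div_le_div_left hμc1 (by omega)
  have hq3 : 2 * (μ * c * Q2) + Q2 ≤ t₂ - t₁ := by
    have h := Nat.div_mul_le_self (t₂ - t₁) (2 * μ * c + 1)
    rw [← hQ2] at h
    have hexp : Q2 * (2 * μ * c + 1) = 2 * (μ * c * Q2) + Q2 := by ring
    omega
  have hstep1 : t₂ - t₁ ≤
      μ * (d (σ t₁) (g (pr t₁)) + c * (Q + 1) + d (σ t₂) (g (pr t₂))) + μ := by
    have := Nat.mul_le_mul_left μ hbig1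
    omega
  have hEb : d (σ t₁) (g (pr t₁)) + c * (Q + 1) + d (σ t₂) (g (pr t₂))
      ≤ 2 * F0 + c * (Q + 1) := by omega
  have h5 : μ * (d (σ t₁) (g (pr t₁)) + c * (Q + 1) + d (σ t₂) (g (pr t₂)))
      ≤ μ * (2 * F0 + c * (Q + 1)) := Nat.mul_le_mul_left _ hEb
  have h6 : μ * (2 * F0 + c * (Q + 1)) = 2 * (μ * F0) + μ * c * Q + μ * c := by ring
  have h7 : μ * c * Q ≤ μ * c * Q2 := Nat.mul_le_mul_left _ hq2
  have hT0' : T0 = 4 * (μ * F0) + 2 * (μ * c) + 2 * μ := by rw [hT0eq]; ring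
  omega



variable {α : Type*} {V : Type*} {W : Type*}

lemma exists_argmin (h : ℕ → ℕ) (n : ℕ) : ∃ i, i ≤ n ∧ ∀ j ≤ n, h i ≤ h j := by
  obtain ⟨i, hi, hmin⟩ :=
    Finset.exists_min_image (Finset.range (n + 1)) h ⟨0, Finset.mem_range.mpr (by omega)⟩
  refine ⟨i, by have := Finset.mem_range.mp hi; omega,
    fun j hj => hmin j (Finset.mem_range.mpr (by omega))⟩

lemma dist_getVert_le (G : SimpleGraph α) (hc : G.Connected) {u v : α} (p : G.Walk u v) :
    ∀ i j, i ≤ j → G.dist (p.getVert i) (p.getVert j) ≤ j - i := by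
  intro i j hij
  induction j with
  | zero =>
    have hi0 : i = 0 := by omega
    subst hi0; simp [SimpleGraph.dist_self]
  | succ k ih =>
    rcases Nat.lt_or_ge i (k + 1) with h | h
    · have h1 := ih (by omega)
      have h2 : G.dist (p.getVert k) (p.getVert (k + 1)) ≤ 1 := by
        rcases Nat.lt_or_ge k p.length with hk | hk
        · exact le_of_eq (SimpleGraph.dist_eq_one_iff_adj.mpr (p.adj_getVert_succ hk))
        · rw [p.getVert_of_length_le hk, p.getVert_of_length_le (by omega)]
          simp [SimpleGraph.dist_self]
      have h3 := hc.dist_triangle (u := p.getVert i) (v := p.getVert k) (w := p.getVert (k + 1))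
      omega
    · have hik : i = k + 1 := by omega
      rw [hik]; simp [SimpleGraph.dist_self]

lemma exists_geodesic (G : SimpleGraph α) (hc : G.Connected) (u v : α) :
    ∃ g : ℕ → α, g 0 = u ∧ g (G.dist u v) = v ∧
      ∀ i j, i ≤ j → j ≤ G.dist u v → G.dist (g i) (g j) = j - i := by
  obtain ⟨p, hp⟩ := hc.exists_walk_length_eq_dist u v
  refine ⟨fun i => p.getVert i, p.getVert_zero, by rw [← hp]; exact p.getVert_length, ?_⟩
  intro i j hij hj
  show G.dist (p.getVert i) (p.getVert j) = j - i
  have hup := dist_getVert_le G hc p i j hij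
  have h0i := dist_getVert_le G hc p 0 i (Nat.zero_le i)
  have hjl := dist_getVert_le G hc p j p.length (by omega)
  rw [p.getVert_zero] at h0i
  rw [p.getVert_length] at hjl
  have htri1 := hc.dist_triangle (u := u) (v := p.getVert i) (w := p.getVert j)
  have htri2 := hc.dist_triangle (u := u) (v := p.getVert j) (w := v)
  omega

/-- The hom from an induced subgraph into the ambient graph. -/
def induceHomVal (G : SimpleGraph α) (s : Set α) : G.induce s →g G :=
  ⟨Subtype.val, fun h => h⟩

lemma dist_le_induce (X : SimpleGraph α) (s : Set α) (hcon : (X.induce s).Connected)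
    (u v : ↥s) : X.dist u.1 v.1 ≤ (X.induce s).dist u v := by
  obtain ⟨p, hp⟩ := hcon.exists_walk_length_eq_dist u v
  calc X.dist u.1 v.1 ≤ (p.map (induceHomVal X s)).length := SimpleGraph.dist_le _
  _ = p.length := Walk.length_map _ _
  _ = _ := hp



variable {V W : Type*} (X : SimpleGraph V) (π : V → W)

lemma mem_fiber {b : W} {v : V} (h : π v = b) : v ∈ π ⁻¹' {b} := by simp [h]

lemma fiber_pi {b : W} (u : ↥(π ⁻¹' {b})) : π u.1 = b := u.2

lemma fiberDist_eq {b : W} {x y : V} (hx : π x = b) (hy : π y = b) :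
    fiberDist X π b x y =
      (X.induce (π ⁻¹' {b})).dist ⟨x, mem_fiber π hx⟩ ⟨y, mem_fiber π hy⟩ := by
  rw [fiberDist, dif_pos ⟨hx, hy⟩]

lemma fiberDist_eq' {b : W} (u v : ↥(π ⁻¹' {b})) :
    fiberDist X π b u.1 v.1 = (X.induce (π ⁻¹' {b})).dist u v := by
  rw [fiberDist_eq X π (fiber_pi π u) (fiber_pi π v)]

lemma fiber_coarse {δ' : ℝ}
    (hcon : ∀ b : W, (X.induce (π ⁻¹' {b})).Connected)
    (h4 : ∀ (b : W) (x y z w : V), π x = b → π y = b → π z = b → π w = b →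
      (fiberDist X π b x y + fiberDist X π b z w : ℝ) ≤
        max (fiberDist X π b x z + fiberDist X π b y w : ℝ)
          (fiberDist X π b x w + fiberDist X π b y z : ℝ) + 2 * δ') (b : W) :
    CoarseGeo (fun u v : ↥(π ⁻¹' {b}) => (X.induce (π ⁻¹' {b})).dist u v) δ' where
  refl a := SimpleGraph.dist_self
  symm a b' := SimpleGraph.dist_comm
  tri a b' c := (hcon b).dist_triangle
  four a b' c e := by
    have h := h4 b a.1 b'.1 c.1 e.1 (fiber_pi π a) (fiber_pi π b') (fiber_pi π c)
      (fiber_pi π e)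
    simpa only [fiberDist_eq' X π] using h



variable {V W : Type*} (X : SimpleGraph V) (π : V → W)

lemma flare_step {B : SimpleGraph W} {μ11 : ℕ}
    (hflare : ∀ γ : Fin 2 → W, IsDiscreteGeodesic B γ → ∀ ℓ₁ ℓ₂ : Fin 2 → V,
      IsQILift X π 1 γ ℓ₁ → IsQILift X π 1 γ ℓ₂ →
      fiberDist X π (γ (Fin.last 1)) (ℓ₁ (Fin.last 1)) (ℓ₂ (Fin.last 1)) ≤
        μ11 * max (fiberDist X π (γ 0) (ℓ₁ 0) (ℓ₂ 0)) 1)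
    {b₁ b₂ : W} (hadj : B.Adj b₁ b₂) {u v u' v' : V}
    (hu : π u = b₁) (hv : π v = b₁) (hu' : π u' = b₂) (hv' : π v' = b₂)
    (huu : X.Adj u u') (hvv : X.Adj v v') :
    fiberDist X π b₂ u' v' ≤ μ11 * max (fiberDist X π b₁ u v) 1 := by
  have hdb : B.dist b₁ b₂ = 1 := SimpleGraph.dist_eq_one_iff_adj.mpr hadj
  have hdb' : B.dist b₂ b₁ = 1 := by rw [SimpleGraph.dist_comm]; exact hdb
  have hgeo : IsDiscreteGeodesic B ![b₁, b₂] := by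
    intro i j
    fin_cases i <;> fin_cases j <;>
      simp [SimpleGraph.dist_self, hdb, hdb']
  have hqi : ∀ w w' : V, π w = b₁ → π w' = b₂ → X.Adj w w' →
      IsQILift X π 1 ![b₁, b₂] ![w, w'] := by
    intro w w' hw hw' hww
    have hd1 : X.dist w w' = 1 := SimpleGraph.dist_eq_one_iff_adj.mpr hww
    have hd1' : X.dist w' w = 1 := by rw [SimpleGraph.dist_comm]; exact hd1
    constructor
    · intro i; fin_cases i <;> simpa
    · intro i j
      fin_cases i <;> fin_cases j <;>
        simp [SimpleGraph.dist_self, hd1, hd1']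
  have h := hflare ![b₁, b₂] hgeo ![u, u'] ![v, v']
    (hqi u u' hu hu' huu) (hqi v v' hv hv' hvv)
  simpa using h

variable {α₁ α₂ : Type*} {d₁ : α₁ → α₁ → ℕ} {d₂ : α₂ → α₂ → ℕ}

/-- The image of the projection point under the fiber-transfer map `φ` lies coarsely
on the geodesic from `φ x` to the image of the ladder endpoint. -/
lemma factA
    (H₁ : CoarseGeo d₁ δ') (H₂ : CoarseGeo d₂ δ') (hδ' : 0 ≤ δ') (μ₁ : ℕ) (hμ₁ : 1 ≤ μ₁)
    {D₁ : ℕ} {g₁ : ℕ → α₁} (hg₁ : IsGeo d₁ D₁ g₁)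
    (φ : α₁ → α₂)
    (hφu : ∀ u v, d₂ (φ u) (φ v) ≤ μ₁ * max (d₁ u v) 1)
    (hφl : ∀ u v, d₁ u v ≤ μ₁ * max (d₂ (φ u) (φ v)) 1)
    (x : α₁) (ip : ℕ) (hip : ip ≤ D₁) (hminx : ∀ j ≤ D₁, d₁ x (g₁ ip) ≤ d₁ x (g₁ j))
    (hgeoex₁ : ∀ u v : α₁, ∃ g : ℕ → α₁, g 0 = u ∧ g (d₁ u v) = v ∧ IsGeo d₁ (d₁ u v) g)
    (hgeoex₂ : ∀ u v : α₂, ∃ g : ℕ → α₂, g 0 = u ∧ g (d₂ u v) = v ∧ IsGeo d₂ (d₂ u v) g) :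
    d₂ (φ x) (φ (g₁ ip)) + d₂ (φ (g₁ ip)) (φ (g₁ 0)) ≤
      d₂ (φ x) (φ (g₁ 0)) + 2 * Rcr1 δ' μ₁ := by
  classical
  obtain ⟨ρ, hρ0, hρm, hρgeo⟩ := hgeoex₁ x (g₁ ip)
  obtain ⟨m, hm⟩ : ∃ m, m = d₁ x (g₁ ip) := ⟨_, rfl⟩
  rw [← hm] at hρm hρgeo
  set τ : ℕ → α₁ := fun a => if a ≤ m then ρ a else g₁ (ip - (a - m)) with hτdef
  have hτ1 : ∀ a, a ≤ m → τ a = ρ a := fun a ha => if_pos ha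
  have hτ2 : ∀ a, m < a → τ a = g₁ (ip - (a - m)) := fun a ha => if_neg (by omega)
  have hτm : τ m = g₁ ip := by rw [hτ1 m le_rfl, hρm]
  have hτ0 : τ 0 = x := by rw [hτ1 0 (Nat.zero_le m), hρ0]
  have hτlast : τ (m + ip) = g₁ 0 := by
    rcases Nat.eq_zero_or_pos ip with h0 | hpos
    · rw [h0]; simpa [h0] using hτm
    · rw [hτ2 (m + ip) (by omega)]
      congr 1; omega
  have htaut : ∀ j ≤ D₁, d₁ x (g₁ ip) + d₁ (g₁ ip) (g₁ j) ≤ d₁ x (g₁ j) + cproj δ' :=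
    fun j hj => proj_taut H₁ hδ' hg₁ x ip hip hminx hj
  -- upper bound along τ
  have hτub : ∀ a b, a ≤ b → b ≤ m + ip → d₁ (τ a) (τ b) ≤ b - a := by
    intro a b hab hb
    rcases le_or_gt b m with hbm | hbm
    · rw [hτ1 a (by omega), hτ1 b hbm, hρgeo a b hab hbm]
    · rcases le_or_gt a m with ham | ham
      · rw [hτ1 a ham, hτ2 b hbm]
        have h1 := H₁.tri (ρ a) (ρ m) (g₁ (ip - (b - m)))
        have h2 : d₁ (ρ a) (ρ m) = m - a := hρgeo a m ham le_rfl
        have h3 : d₁ (ρ m) (g₁ (ip - (b - m))) = b - m := by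
          rw [hρm, H₁.symm]
          have := hg₁ (ip - (b - m)) ip (by omega) hip
          omega
        omega
      · rw [hτ2 a ham, hτ2 b hbm]
        rw [H₁.symm]
        have := hg₁ (ip - (b - m)) (ip - (a - m)) (by omega) (by omega)
        omega
  -- lower bound along τ
  have hτlb : ∀ a b, a ≤ b → b ≤ m + ip → b - a ≤ d₁ (τ a) (τ b) + cproj δ' := by
    intro a b hab hb
    rcases le_or_gt b m with hbm | hbm
    · rw [hτ1 a (by omega), hτ1 b hbm, hρgeo a b hab hbm]; omega
    · rcases le_or_gt a m with ham | ham
      · rw [hτ1 a ham, hτ2 b hbm]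
        have h1 := H₁.tri x (ρ a) (g₁ (ip - (b - m)))
        have h2 : d₁ x (ρ a) = a := by
          rw [← hρ0]; rw [hρgeo 0 a (Nat.zero_le a) ham]; omega
        have h3 := htaut (ip - (b - m)) (by omega)
        have h4 : d₁ (g₁ ip) (g₁ (ip - (b - m))) = b - m := by
          rw [H₁.symm]
          have := hg₁ (ip - (b - m)) ip (by omega) hip
          omega
        omega
      · rw [hτ2 a ham, hτ2 b hbm]
        rw [H₁.symm]
        have := hg₁ (ip - (b - m)) (ip - (a - m)) (by omega) (by omega)
        omega
  -- geodesic G in α₂ from φ x to φ (g₁ 0)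
  obtain ⟨G, hG0, hGn, hGgeo⟩ := hgeoex₂ (φ x) (φ (g₁ 0))
  obtain ⟨n₁, hn₁⟩ : ∃ n₁, n₁ = d₂ (φ x) (φ (g₁ 0)) := ⟨_, rfl⟩
  rw [← hn₁] at hGn hGgeo
  -- nearest-point projections onto G
  have hargmin := fun z : α₂ => exists_argmin (fun j => d₂ z (G j)) n₁
  choose prG hprGle hprGmin using hargmin
  -- Morse for φ ∘ τ against G
  have hmorse := morse (d := d₂) H₂ hδ' hGgeo (fun a => φ (τ a)) (m + ip) μ₁
    (μ₁ + cproj δ') 0 hμ₁ (by omega) (fun a => prG (φ (τ a)))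
    (fun a => hprGle _) (fun a => hprGmin _)
    (by
      intro a ha
      have h := hτub a (a + 1) (by omega) (by omega)
      calc d₂ (φ (τ a)) (φ (τ (a + 1))) ≤ μ₁ * max (d₁ (τ a) (τ (a + 1))) 1 := hφu _ _
      _ ≤ μ₁ * 1 := Nat.mul_le_mul_left _ (by omega)
      _ = μ₁ := mul_one _)
    (by
      intro a b hab hb
      show b - a ≤ (μ₁ + cproj δ') * d₂ (φ (τ a)) (φ (τ b)) + (μ₁ + cproj δ')
      have h1 := hτlb a b hab hb
      have h2 := hφl (τ a) (τ b)
      have h3 : μ₁ * max (d₂ (φ (τ a)) (φ (τ b))) 1 ≤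
          μ₁ * (d₂ (φ (τ a)) (φ (τ b)) + 1) := Nat.mul_le_mul_left _ (by omega)
      have h4 : μ₁ * (d₂ (φ (τ a)) (φ (τ b)) + 1) = μ₁ * d₂ (φ (τ a)) (φ (τ b)) + μ₁ := by
        ring
      have h5 : (μ₁ + cproj δ') * d₂ (φ (τ a)) (φ (τ b)) =
          μ₁ * d₂ (φ (τ a)) (φ (τ b)) + cproj δ' * d₂ (φ (τ a)) (φ (τ b)) := by ring
      omega)
    (by show d₂ (φ (τ 0)) (G 0) ≤ 0; rw [hτ0, hG0, H₂.refl])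
    (by show d₂ (φ (τ (m + ip))) (G n₁) ≤ 0; rw [hτlast, hGn, H₂.refl])
  have hRA : d₂ (φ (τ m)) (G (prG (φ (τ m)))) ≤ Rm δ' μ₁ (μ₁ + cproj δ') 0 :=
    hmorse m (by omega)
  rw [hτm] at hRA
  -- conclude
  obtain ⟨js, hjs⟩ : ∃ js, js = prG (φ (g₁ ip)) := ⟨_, rfl⟩
  rw [← hjs] at hRA
  have hjsle : js ≤ n₁ := by rw [hjs]; exact hprGle _
  have hd0 : d₂ (φ x) (G js) = js := by
    rw [← hG0]
    have := hGgeo 0 js (Nat.zero_le js) hjsle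
    omega
  have hdn : d₂ (G js) (φ (g₁ 0)) = n₁ - js := by
    rw [← hGn]; exact hGgeo js n₁ hjsle le_rfl
  have ht1 := H₂.tri (φ x) (G js) (φ (g₁ ip))
  have ht2 := H₂.tri (φ (g₁ ip)) (G js) (φ (g₁ 0))
  have hsy : d₂ (G js) (φ (g₁ ip)) = d₂ (φ (g₁ ip)) (G js) := H₂.symm _ _
  rw [hd0] at ht1
  rw [hdn] at ht2
  have hn₁' : n₁ = d₂ (φ x) (φ (g₁ 0)) := hn₁
  have hR : Rcr1 δ' μ₁ = Rm δ' μ₁ (μ₁ + cproj δ') 0 := rfl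
  omega

/-- Abstract form of the cross-fiber projection comparison. -/
lemma cross_abstract
    (H₁ : CoarseGeo d₁ δ') (H₂ : CoarseGeo d₂ δ') (hδ' : 0 ≤ δ')
    (μ₁ e e2 : ℕ) (hμ₁ : 1 ≤ μ₁)
    {D₁ D₂ : ℕ} {g₁ : ℕ → α₁} {g₂ : ℕ → α₂}
    (hg₁ : IsGeo d₁ D₁ g₁) (hg₂ : IsGeo d₂ D₂ g₂)
    (φ : α₁ → α₂)
    (hφu : ∀ u v, d₂ (φ u) (φ v) ≤ μ₁ * max (d₁ u v) 1)
    (hφl : ∀ u v, d₁ u v ≤ μ₁ * max (d₂ (φ u) (φ v)) 1)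
    (x : α₁) (y : α₂)
    (hyx : d₂ y (φ x) ≤ e2)
    (hend1 : d₂ (φ (g₁ 0)) (g₂ 0) ≤ e)
    (hend2 : d₂ (φ (g₁ D₁)) (g₂ D₂) ≤ e)
    (ip : ℕ) (hip : ip ≤ D₁) (hminx : ∀ j ≤ D₁, d₁ x (g₁ ip) ≤ d₁ x (g₁ j))
    (iq : ℕ) (hiq : iq ≤ D₂) (hminy : ∀ j ≤ D₂, d₂ y (g₂ iq) ≤ d₂ y (g₂ j))
    (hgeoex₁ : ∀ u v : α₁, ∃ g : ℕ → α₁, g 0 = u ∧ g (d₁ u v) = v ∧ IsGeo d₁ (d₁ u v) g)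
    (hgeoex₂ : ∀ u v : α₂, ∃ g : ℕ → α₂, g 0 = u ∧ g (d₂ u v) = v ∧ IsGeo d₂ (d₂ u v) g) :
    d₂ (g₂ iq) (φ (g₁ ip)) ≤ Mcr δ' μ₁ e e2 + Rcr2 δ' μ₁ e := by
  classical
  -- Morse: the image of the ladder geodesic is near `g₂`
  have hargmin := fun z : α₂ => exists_argmin (fun j => d₂ z (g₂ j)) D₂
  choose pr2 hpr2le hpr2min using hargmin
  have hmorse := morse (d := d₂) H₂ hδ' hg₂ (fun t => φ (g₁ t)) D₁ μ₁ μ₁ e hμ₁ hμ₁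
    (fun t => pr2 (φ (g₁ t))) (fun t => hpr2le _) (fun t => hpr2min _)
    (by
      intro t ht
      have h : d₁ (g₁ t) (g₁ (t + 1)) = 1 := by
        have := hg₁ t (t + 1) (by omega) (by omega); omega
      calc d₂ (φ (g₁ t)) (φ (g₁ (t + 1))) ≤ μ₁ * max (d₁ (g₁ t) (g₁ (t + 1))) 1 :=
        hφu _ _
      _ ≤ μ₁ * 1 := Nat.mul_le_mul_left _ (by omega)
      _ = μ₁ := mul_one _)
    (by
      intro t t' htt ht'
      show t' - t ≤ μ₁ * d₂ (φ (g₁ t)) (φ (g₁ t')) + μ₁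
      have h1 : d₁ (g₁ t) (g₁ t') = t' - t := hg₁ t t' htt ht'
      have h2 := hφl (g₁ t) (g₁ t')
      have h3 : μ₁ * max (d₂ (φ (g₁ t)) (φ (g₁ t'))) 1 ≤
          μ₁ * (d₂ (φ (g₁ t)) (φ (g₁ t')) + 1) := Nat.mul_le_mul_left _ (by omega)
      have h4 : μ₁ * (d₂ (φ (g₁ t)) (φ (g₁ t')) + 1) =
          μ₁ * d₂ (φ (g₁ t)) (φ (g₁ t')) + μ₁ := by ring
      omega)
    (by show d₂ (φ (g₁ 0)) (g₂ 0) ≤ e; exact hend1)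
    (by show d₂ (φ (g₁ D₁)) (g₂ D₂) ≤ e; exact hend2)
  have hirR : d₂ (φ (g₁ ip)) (g₂ (pr2 (φ (g₁ ip)))) ≤ Rm δ' μ₁ μ₁ e := hmorse ip hip
  obtain ⟨ir, hirdef⟩ : ∃ ir, ir = pr2 (φ (g₁ ip)) := ⟨_, rfl⟩
  rw [← hirdef] at hirR
  have hirle : ir ≤ D₂ := by rw [hirdef]; exact hpr2le _
  -- Fact A (towards `g₁ 0`)
  have hA := factA H₁ H₂ hδ' μ₁ hμ₁ hg₁ φ hφu hφl x ip hip hminx hgeoex₁ hgeoex₂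
  -- Fact B (towards `g₁ D₁`), via the reversed geodesic
  have hB : d₂ (φ x) (φ (g₁ (D₁ - (D₁ - ip)))) +
      d₂ (φ (g₁ (D₁ - (D₁ - ip)))) (φ (g₁ (D₁ - 0))) ≤
      d₂ (φ x) (φ (g₁ (D₁ - 0))) + 2 * Rcr1 δ' μ₁ :=
    factA H₁ H₂ hδ' μ₁ hμ₁ (hg₁.rev H₁) φ hφu hφl x (D₁ - ip) (by omega)
      (fun j hj => by
        show d₁ x (g₁ (D₁ - (D₁ - ip))) ≤ d₁ x (g₁ (D₁ - j))
        rw [show D₁ - (D₁ - ip) = ip by omega]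
        exact hminx (D₁ - j) (by omega))
      hgeoex₁ hgeoex₂
  rw [show D₁ - (D₁ - ip) = ip by omega, show D₁ - 0 = D₁ by omega] at hB
  -- projection inequalities for `y`
  have h1q := proj_taut H₂ hδ' hg₂ y iq hiq hminy (j := 0) (by omega)
  have h3q := proj_taut H₂ hδ' hg₂ y iq hiq hminy (j := D₂) le_rfl
  have eq1 : d₂ (g₂ iq) (g₂ 0) = iq := by
    rw [H₂.symm]
    have := hg₂ 0 iq (Nat.zero_le iq) hiq; omega
  have eq2 : d₂ (g₂ iq) (g₂ D₂) = D₂ - iq := hg₂ iq D₂ hiq le_rfl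
  rw [eq1] at h1q
  rw [eq2] at h3q
  have t2q := H₂.tri y (g₂ iq) (g₂ 0)
  rw [eq1] at t2q
  have t4q := H₂.tri y (g₂ iq) (g₂ D₂)
  rw [eq2] at t4q
  -- position of `g₂ ir`
  have er0 : d₂ (g₂ ir) (g₂ 0) = ir := by
    rw [H₂.symm]
    have := hg₂ 0 ir (Nat.zero_le ir) hirle; omega
  have erD : d₂ (g₂ ir) (g₂ D₂) = D₂ - ir := hg₂ ir D₂ hirle le_rfl
  have tr1 := H₂.tri (φ (g₁ ip)) (g₂ ir) (g₂ 0)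
  rw [er0] at tr1
  have tr2 := H₂.tri (g₂ ir) (φ (g₁ ip)) (g₂ 0)
  rw [er0] at tr2
  have hs1 : d₂ (g₂ ir) (φ (g₁ ip)) = d₂ (φ (g₁ ip)) (g₂ ir) := H₂.symm _ _
  have tr3 := H₂.tri (φ (g₁ ip)) (g₂ ir) (g₂ D₂)
  rw [erD] at tr3
  have tr4 := H₂.tri (g₂ ir) (φ (g₁ ip)) (g₂ D₂)
  rw [erD] at tr4
  -- bridges
  have sxy : d₂ (φ x) y = d₂ y (φ x) := H₂.symm _ _
  have s01 : d₂ (g₂ 0) (φ (g₁ 0)) = d₂ (φ (g₁ 0)) (g₂ 0) := H₂.symm _ _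
  have sD1 : d₂ (g₂ D₂) (φ (g₁ D₁)) = d₂ (φ (g₁ D₁)) (g₂ D₂) := H₂.symm _ _
  have u1 := H₂.tri (φ x) y (φ (g₁ D₁))
  have u2 := H₂.tri y (g₂ D₂) (φ (g₁ D₁))
  have u3 := H₂.tri y (φ x) (φ (g₁ ip))
  have u4 := H₂.tri (φ (g₁ ip)) (φ (g₁ D₁)) (g₂ D₂)
  have u5 := H₂.tri (φ x) y (φ (g₁ 0))
  have u6 := H₂.tri y (g₂ 0) (φ (g₁ 0))
  have u7 := H₂.tri (φ (g₁ ip)) (φ (g₁ 0)) (g₂ 0)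
  have v1 := H₂.tri y (φ (g₁ ip)) (g₂ 0)
  have v2 := H₂.tri y (φ (g₁ ip)) (g₂ D₂)
  have hMcr : Mcr δ' μ₁ e e2 = Rcr2 δ' μ₁ e + Rcr1 δ' μ₁ + e2 + e + cproj δ' := rfl
  have hR2 : Rcr2 δ' μ₁ e = Rm δ' μ₁ μ₁ e := rfl
  -- final comparison
  have gt1 := H₂.tri (g₂ iq) (g₂ ir) (φ (g₁ ip))
  rcases le_total iq ir with hqr | hqr
  · have heqr : d₂ (g₂ iq) (g₂ ir) = ir - iq := hg₂ iq ir hqr hirle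
    omega
  · have heqr : d₂ (g₂ iq) (g₂ ir) = iq - ir := by
      rw [H₂.symm]; exact hg₂ ir iq hqr hiq
    omega


end LadderAux

/-- **Retraction onto a ladder is coarsely Lipschitz.**
Let `π : X̂ → B` be a metric graph bundle with `δ'`-hyperbolic fibers satisfying
bounded flaring, let `Σ₁, Σ₂` be `K`-qi sections, and let `L(Σ₁,Σ₂)` be the ladder
formed by fiber geodesics `λ_b` from `Σ₁ ∩ F_b` to `Σ₂ ∩ F_b`.  Define
`Π : X̂ → L(Σ₁,Σ₂)` by nearest-point projection to `λ_b` within each fiber.  Then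
`Π` is a coarse `C`-Lipschitz retraction, with `C` depending only on `K, δ'` and
the bundle parameters. -/
theorem ladder_retraction_coarse_lipschitz
    (K : ℕ) (hK : 1 ≤ K) (δ' : ℝ) (hδ' : 0 ≤ δ') (μ : ℕ → ℕ → ℕ) (η : ℕ → ℕ) :
    ∃ C : ℕ, ∀ {V W : Type*} (X : SimpleGraph V) (B : SimpleGraph W) (π : V → W),
      X.Connected → B.Connected → Function.Surjective π →
      (∀ ⦃u v : V⦄, X.Adj u v → B.Adj (π u) (π v) ∨ π u = π v) →
      (∀ b : W, (X.induce (π ⁻¹' {b})).Connected) →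
      (∀ (b : W) (x y : V), π x = b → π y = b → ∀ N : ℕ,
        X.dist x y ≤ N → fiberDist X π b x y ≤ η N) →
      (∀ ⦃b₁ b₂ : W⦄, B.Adj b₁ b₂ → ∀ x : V, π x = b₁ →
        ∃ y : V, π y = b₂ ∧ X.Adj x y) →
      -- each fiber is `δ'`-hyperbolic (four-point condition):
      (∀ (b : W) (x y z w : V), π x = b → π y = b → π z = b → π w = b →
        (fiberDist X π b x y + fiberDist X π b z w : ℝ) ≤
          max (fiberDist X π b x z + fiberDist X π b y w : ℝ)
            (fiberDist X π b x w + fiberDist X π b y z : ℝ) + 2 * δ') →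
      -- bounded flaring with functions `μ k`:
      (∀ k : ℕ, 1 ≤ k → ∀ N n : ℕ, n ≤ N → ∀ γ : Fin (n + 1) → W,
        IsDiscreteGeodesic B γ → ∀ ℓ₁ ℓ₂ : Fin (n + 1) → V,
        IsQILift X π k γ ℓ₁ → IsQILift X π k γ ℓ₂ →
        fiberDist X π (γ (Fin.last n)) (ℓ₁ (Fin.last n)) (ℓ₂ (Fin.last n)) ≤
          μ k N * max (fiberDist X π (γ 0) (ℓ₁ 0) (ℓ₂ 0)) 1) →
      ∀ s₁ s₂ : W → V,
      (∀ b : W, π (s₁ b) = b) → (∀ b : W, π (s₂ b) = b) →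
      (∀ b b' : W, X.dist (s₁ b) (s₁ b') ≤ K * B.dist b b' + K ∧
        B.dist b b' ≤ K * X.dist (s₁ b) (s₁ b') + K) →
      (∀ b b' : W, X.dist (s₂ b) (s₂ b') ≤ K * B.dist b b' + K ∧
        B.dist b b' ≤ K * X.dist (s₂ b) (s₂ b') + K) →
      -- the ladder: a fiber geodesic `lam b` from `s₁ b` to `s₂ b` in each fiber
      ∀ lam : W → ℕ → V,
      (∀ (b : W) (i : ℕ), π (lam b i) = b) →
      (∀ b : W, lam b 0 = s₁ b) →
      (∀ b : W, lam b (fiberDist X π b (s₁ b) (s₂ b)) = s₂ b) →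
      (∀ (b : W) (i j : ℕ), i ≤ fiberDist X π b (s₁ b) (s₂ b) →
        j ≤ fiberDist X π b (s₁ b) (s₂ b) →
        fiberDist X π b (lam b i) (lam b j) = ((i : ℤ) - (j : ℤ)).natAbs) →
      -- the fiberwise nearest-point projection `Π` onto the ladder:
      ∀ P : V → V,
      (∀ x : V, π (P x) = π x) →
      (∀ x : V, ∃ i ≤ fiberDist X π (π x) (s₁ (π x)) (s₂ (π x)),
        P x = lam (π x) i) →
      (∀ x : V, ∀ i ≤ fiberDist X π (π x) (s₁ (π x)) (s₂ (π x)),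
        fiberDist X π (π x) x (P x) ≤ fiberDist X π (π x) x (lam (π x) i)) →
      -- conclusion: `Π` is a coarse `C`-Lipschitz retraction
      (∀ x y : V, X.dist (P x) (P y) ≤ C * X.dist x y + C) ∧
      (∀ (b : W) (i : ℕ), i ≤ fiberDist X π b (s₁ b) (s₂ b) →
        X.dist (P (lam b i)) (lam b i) ≤ C) := by
  classical
  refine ⟨LadderAux.Cfin K δ' μ η, ?_⟩
  intro V W X B π hXconn hBconn hsurj hadjB hfibcon hη hlift h4 hflare
    s₁ s₂ hs₁π hs₂π hs₁qi hs₂qi lam hlamπ hlam0 hlamend hlamgeo P hPπ hPex hPmin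
  have hXtri : ∀ u v w : V, X.dist u w ≤ X.dist u v + X.dist v w :=
    fun u v w => hXconn.dist_triangle
  have hAdj1 : ∀ {u v : V}, X.Adj u v → X.dist u v ≤ 1 :=
    fun h => le_of_eq (SimpleGraph.dist_eq_one_iff_adj.mpr h)
  have hfd_le : ∀ (b : W) (u v : V), π u = b → π v = b →
      X.dist u v ≤ fiberDist X π b u v := by
    intro b u v hu hv
    rw [LadderAux.fiberDist_eq X π hu hv]
    exact LadderAux.dist_le_induce X _ (hfibcon b) ⟨u, LadderAux.mem_fiber π hu⟩
      ⟨v, LadderAux.mem_fiber π hv⟩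
  have hcg := LadderAux.fiber_coarse X π (δ' := δ') hfibcon h4
  have hlamGeo : ∀ b : W, LadderAux.IsGeo
      (fun u v : ↥(π ⁻¹' {b}) => (X.induce (π ⁻¹' {b})).dist u v)
      (fiberDist X π b (s₁ b) (s₂ b))
      (fun j => ⟨lam b j, LadderAux.mem_fiber π (hlamπ b j)⟩) := by
    intro b i j hij hj
    show (X.induce (π ⁻¹' {b})).dist ⟨lam b i, LadderAux.mem_fiber π (hlamπ b i)⟩
      ⟨lam b j, LadderAux.mem_fiber π (hlamπ b j)⟩ = j - i
    have h := hlamgeo b i j (le_trans hij hj) hj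
    rw [LadderAux.fiberDist_eq X π (hlamπ b i) (hlamπ b j)] at h
    omega
  have hgeoex : ∀ (b : W) (u v : ↥(π ⁻¹' {b})), ∃ g : ℕ → ↥(π ⁻¹' {b}),
      g 0 = u ∧ g ((X.induce (π ⁻¹' {b})).dist u v) = v ∧
      LadderAux.IsGeo (fun a b' : ↥(π ⁻¹' {b}) => (X.induce (π ⁻¹' {b})).dist a b')
        ((X.induce (π ⁻¹' {b})).dist u v) g := by
    intro b u v
    obtain ⟨g, h0, h1, h2⟩ :=
      LadderAux.exists_geodesic (X.induce (π ⁻¹' {b})) (hfibcon b) u v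
    exact ⟨g, h0, h1, h2⟩
  -- the retraction bound
  have hretr : ∀ (b : W) (i : ℕ), i ≤ fiberDist X π b (s₁ b) (s₂ b) →
      X.dist (P (lam b i)) (lam b i) ≤ LadderAux.Cfin K δ' μ η := by
    intro b i hi
    have hπi : π (lam b i) = b := hlamπ b i
    have h1 := hPmin (lam b i)
    rw [hπi] at h1
    have h2 := h1 i hi
    have h0 : fiberDist X π b (lam b i) (lam b i) = 0 := by
      rw [hlamgeo b i i hi hi]; simp
    rw [h0] at h2
    have h3 : π (P (lam b i)) = b := by rw [hPπ]; exact hπi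
    have h4 := hfd_le b (P (lam b i)) (lam b i) h3 hπi
    have h5 : fiberDist X π b (lam b i) (P (lam b i)) =
        fiberDist X π b (P (lam b i)) (lam b i) := by
      rw [LadderAux.fiberDist_eq X π hπi h3, LadderAux.fiberDist_eq X π h3 hπi,
        SimpleGraph.dist_comm]
    omega
  -- the one-step bound
  have hstep : ∀ x y : V, X.Adj x y →
      X.dist (P x) (P y) ≤ LadderAux.Cfin K δ' μ η := by
    intro x y hxy
    obtain ⟨ip, hip, hPx⟩ := hPex x
    rcases hadjB hxy with hBadj | hsame
    · -- cross-fiber case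
      obtain ⟨iq, hiq, hPy⟩ := hPex y
      have hliftv := fun v : ↥(π ⁻¹' {π x}) => hlift hBadj v.1 v.2
      choose φv hφπ hφadj using hliftv
      have hBd1 : B.dist (π x) (π y) = 1 := SimpleGraph.dist_eq_one_iff_adj.mpr hBadj
      have hflare2 : ∀ γ : Fin 2 → W, IsDiscreteGeodesic B γ → ∀ ℓ₁ ℓ₂ : Fin 2 → V,
          IsQILift X π 1 γ ℓ₁ → IsQILift X π 1 γ ℓ₂ →
          fiberDist X π (γ (Fin.last 1)) (ℓ₁ (Fin.last 1)) (ℓ₂ (Fin.last 1)) ≤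
            μ 1 1 * max (fiberDist X π (γ 0) (ℓ₁ 0) (ℓ₂ 0)) 1 :=
        fun γ hγ ℓ₁ ℓ₂ h1 h2 => hflare 1 le_rfl 1 1 le_rfl γ hγ ℓ₁ ℓ₂ h1 h2
      have hφu : ∀ u v : ↥(π ⁻¹' {π x}),
          (X.induce (π ⁻¹' {π y})).dist
            ⟨φv u, LadderAux.mem_fiber π (hφπ u)⟩
            ⟨φv v, LadderAux.mem_fiber π (hφπ v)⟩ ≤
          LadderAux.mu1 μ * max ((X.induce (π ⁻¹' {π x})).dist u v) 1 := by
        intro u v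
        have h := LadderAux.flare_step X π hflare2 hBadj (LadderAux.fiber_pi π u)
          (LadderAux.fiber_pi π v) (hφπ u) (hφπ v) (hφadj u) (hφadj v)
        rw [LadderAux.fiberDist_eq X π (hφπ u) (hφπ v),
          LadderAux.fiberDist_eq X π (LadderAux.fiber_pi π u)
            (LadderAux.fiber_pi π v)] at h
        have h2 : (X.induce (π ⁻¹' {π y})).dist
            ⟨φv u, LadderAux.mem_fiber π (hφπ u)⟩
            ⟨φv v, LadderAux.mem_fiber π (hφπ v)⟩ ≤
            μ 1 1 * max ((X.induce (π ⁻¹' {π x})).dist u v) 1 := h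
        calc _ ≤ μ 1 1 * max ((X.induce (π ⁻¹' {π x})).dist u v) 1 := h2
        _ ≤ LadderAux.mu1 μ * max ((X.induce (π ⁻¹' {π x})).dist u v) 1 :=
          Nat.mul_le_mul_right _ (le_max_left _ _)
      have hφl : ∀ u v : ↥(π ⁻¹' {π x}),
          (X.induce (π ⁻¹' {π x})).dist u v ≤
          LadderAux.mu1 μ * max ((X.induce (π ⁻¹' {π y})).dist
            ⟨φv u, LadderAux.mem_fiber π (hφπ u)⟩
            ⟨φv v, LadderAux.mem_fiber π (hφπ v)⟩) 1 := by
        intro u v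
        have h := LadderAux.flare_step X π hflare2 hBadj.symm (hφπ u) (hφπ v)
          (LadderAux.fiber_pi π u) (LadderAux.fiber_pi π v)
          (hφadj u).symm (hφadj v).symm
        rw [LadderAux.fiberDist_eq X π (LadderAux.fiber_pi π u)
            (LadderAux.fiber_pi π v),
          LadderAux.fiberDist_eq X π (hφπ u) (hφπ v)] at h
        have h2 : (X.induce (π ⁻¹' {π x})).dist u v ≤
            μ 1 1 * max ((X.induce (π ⁻¹' {π y})).dist
              ⟨φv u, LadderAux.mem_fiber π (hφπ u)⟩
              ⟨φv v, LadderAux.mem_fiber π (hφπ v)⟩) 1 := h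
        calc _ ≤ _ := h2
        _ ≤ LadderAux.mu1 μ * max ((X.induce (π ⁻¹' {π y})).dist
              ⟨φv u, LadderAux.mem_fiber π (hφπ u)⟩
              ⟨φv v, LadderAux.mem_fiber π (hφπ v)⟩) 1 :=
          Nat.mul_le_mul_right _ (le_max_left _ _)
      -- bridging estimates
      have hyΦx : (X.induce (π ⁻¹' {π y})).dist ⟨y, LadderAux.mem_fiber π rfl⟩
          ⟨φv ⟨x, LadderAux.mem_fiber π rfl⟩,
            LadderAux.mem_fiber π (hφπ ⟨x, LadderAux.mem_fiber π rfl⟩)⟩ ≤ η 2 := by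
        have hd : X.dist y (φv ⟨x, LadderAux.mem_fiber π rfl⟩) ≤ 2 := by
          have h1 : X.dist y x ≤ 1 := hAdj1 hxy.symm
          have h2 : X.dist x (φv ⟨x, LadderAux.mem_fiber π rfl⟩) ≤ 1 :=
            hAdj1 (hφadj ⟨x, LadderAux.mem_fiber π rfl⟩)
          have h3 := hXtri y x (φv ⟨x, LadderAux.mem_fiber π rfl⟩)
          omega
        have h := hη (π y) y (φv ⟨x, LadderAux.mem_fiber π rfl⟩) rfl
          (hφπ ⟨x, LadderAux.mem_fiber π rfl⟩) 2 hd
        rw [LadderAux.fiberDist_eq X π rfl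
          (hφπ ⟨x, LadderAux.mem_fiber π rfl⟩)] at h
        exact h
      have hend1 : (X.induce (π ⁻¹' {π y})).dist
          ⟨φv ⟨lam (π x) 0, LadderAux.mem_fiber π (hlamπ (π x) 0)⟩,
            LadderAux.mem_fiber π (hφπ ⟨lam (π x) 0, LadderAux.mem_fiber π (hlamπ (π x) 0)⟩)⟩
          ⟨lam (π y) 0, LadderAux.mem_fiber π (hlamπ (π y) 0)⟩ ≤ η (2 * K + 1) := by
        have hd : X.dist (φv ⟨lam (π x) 0, LadderAux.mem_fiber π (hlamπ (π x) 0)⟩)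
            (lam (π y) 0) ≤ 2 * K + 1 := by
          have h1 : X.dist (φv ⟨lam (π x) 0, LadderAux.mem_fiber π (hlamπ (π x) 0)⟩)
              (lam (π x) 0) ≤ 1 :=
            hAdj1 (hφadj ⟨lam (π x) 0, LadderAux.mem_fiber π (hlamπ (π x) 0)⟩).symm
          have h2 : X.dist (lam (π x) 0) (lam (π y) 0) ≤ 2 * K := by
            rw [hlam0 (π x), hlam0 (π y)]
            have h := (hs₁qi (π x) (π y)).1
            rw [hBd1] at h
            have hK1 : K * 1 = K := mul_one K
            omega
          have h3 := hXtri (φv ⟨lam (π x) 0, LadderAux.mem_fiber π (hlamπ (π x) 0)⟩)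
            (lam (π x) 0) (lam (π y) 0)
          omega
        have h := hη (π y) _ _
          (hφπ ⟨lam (π x) 0, LadderAux.mem_fiber π (hlamπ (π x) 0)⟩)
          (hlamπ (π y) 0) (2 * K + 1) hd
        rw [LadderAux.fiberDist_eq X π
          (hφπ ⟨lam (π x) 0, LadderAux.mem_fiber π (hlamπ (π x) 0)⟩)
          (hlamπ (π y) 0)] at h
        exact h
      have hend2 : (X.induce (π ⁻¹' {π y})).dist
          ⟨φv ⟨lam (π x) (fiberDist X π (π x) (s₁ (π x)) (s₂ (π x))),
              LadderAux.mem_fiber π (hlamπ (π x) _)⟩,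
            LadderAux.mem_fiber π (hφπ ⟨lam (π x) (fiberDist X π (π x) (s₁ (π x)) (s₂ (π x))),
              LadderAux.mem_fiber π (hlamπ (π x) _)⟩)⟩
          ⟨lam (π y) (fiberDist X π (π y) (s₁ (π y)) (s₂ (π y))),
            LadderAux.mem_fiber π (hlamπ (π y) _)⟩ ≤ η (2 * K + 1) := by
        have hd : X.dist (φv ⟨lam (π x) (fiberDist X π (π x) (s₁ (π x)) (s₂ (π x))),
              LadderAux.mem_fiber π (hlamπ (π x) _)⟩)
            (lam (π y) (fiberDist X π (π y) (s₁ (π y)) (s₂ (π y)))) ≤ 2 * K + 1 := by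
          have h1 : X.dist (φv ⟨lam (π x) (fiberDist X π (π x) (s₁ (π x)) (s₂ (π x))),
                LadderAux.mem_fiber π (hlamπ (π x) _)⟩)
              (lam (π x) (fiberDist X π (π x) (s₁ (π x)) (s₂ (π x)))) ≤ 1 :=
            hAdj1 (hφadj _).symm
          have h2 : X.dist (lam (π x) (fiberDist X π (π x) (s₁ (π x)) (s₂ (π x))))
              (lam (π y) (fiberDist X π (π y) (s₁ (π y)) (s₂ (π y)))) ≤ 2 * K := by
            rw [hlamend (π x), hlamend (π y)]
            have h := (hs₂qi (π x) (π y)).1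
            rw [hBd1] at h
            have hK1 : K * 1 = K := mul_one K
            omega
          have h3 := hXtri (φv ⟨lam (π x) (fiberDist X π (π x) (s₁ (π x)) (s₂ (π x))),
              LadderAux.mem_fiber π (hlamπ (π x) _)⟩)
            (lam (π x) (fiberDist X π (π x) (s₁ (π x)) (s₂ (π x))))
            (lam (π y) (fiberDist X π (π y) (s₁ (π y)) (s₂ (π y))))
          omega
        have h := hη (π y) _ _ (hφπ _) (hlamπ (π y) _) (2 * K + 1) hd
        rw [LadderAux.fiberDist_eq X π (hφπ _) (hlamπ (π y) _)] at h
        exact h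
      -- minimality of the projections
      have hminx : ∀ j ≤ fiberDist X π (π x) (s₁ (π x)) (s₂ (π x)),
          (X.induce (π ⁻¹' {π x})).dist ⟨x, LadderAux.mem_fiber π rfl⟩
            ⟨lam (π x) ip, LadderAux.mem_fiber π (hlamπ (π x) ip)⟩ ≤
          (X.induce (π ⁻¹' {π x})).dist ⟨x, LadderAux.mem_fiber π rfl⟩
            ⟨lam (π x) j, LadderAux.mem_fiber π (hlamπ (π x) j)⟩ := by
        intro j hj
        have h := hPmin x j hj
        rw [hPx] at h
        rw [LadderAux.fiberDist_eq X π rfl (hlamπ (π x) ip),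
          LadderAux.fiberDist_eq X π rfl (hlamπ (π x) j)] at h
        exact h
      have hminy : ∀ j ≤ fiberDist X π (π y) (s₁ (π y)) (s₂ (π y)),
          (X.induce (π ⁻¹' {π y})).dist ⟨y, LadderAux.mem_fiber π rfl⟩
            ⟨lam (π y) iq, LadderAux.mem_fiber π (hlamπ (π y) iq)⟩ ≤
          (X.induce (π ⁻¹' {π y})).dist ⟨y, LadderAux.mem_fiber π rfl⟩
            ⟨lam (π y) j, LadderAux.mem_fiber π (hlamπ (π y) j)⟩ := by
        intro j hj
        have h := hPmin y j hj
        rw [hPy] at h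
        rw [LadderAux.fiberDist_eq X π rfl (hlamπ (π y) iq),
          LadderAux.fiberDist_eq X π rfl (hlamπ (π y) j)] at h
        exact h
      -- the abstract cross lemma
      have hcross : (X.induce (π ⁻¹' {π y})).dist
          ⟨lam (π y) iq, LadderAux.mem_fiber π (hlamπ (π y) iq)⟩
          ⟨φv ⟨lam (π x) ip, LadderAux.mem_fiber π (hlamπ (π x) ip)⟩,
            LadderAux.mem_fiber π (hφπ ⟨lam (π x) ip, LadderAux.mem_fiber π (hlamπ (π x) ip)⟩)⟩ ≤
          LadderAux.Mcr δ' (LadderAux.mu1 μ) (η (2 * K + 1)) (η 2) +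
            LadderAux.Rcr2 δ' (LadderAux.mu1 μ) (η (2 * K + 1)) :=
        LadderAux.cross_abstract (hcg (π x)) (hcg (π y)) hδ'
          (LadderAux.mu1 μ) (η (2 * K + 1)) (η 2) (le_max_right _ _)
          (hlamGeo (π x)) (hlamGeo (π y))
          (fun v => ⟨φv v, LadderAux.mem_fiber π (hφπ v)⟩)
          hφu hφl
          ⟨x, LadderAux.mem_fiber π rfl⟩ ⟨y, LadderAux.mem_fiber π rfl⟩
          hyΦx hend1 hend2 ip hip hminx iq hiq hminy
          (hgeoex (π x)) (hgeoex (π y))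
      -- conclude
      have hfdle2 : X.dist (φv ⟨lam (π x) ip, LadderAux.mem_fiber π (hlamπ (π x) ip)⟩)
          (lam (π y) iq) ≤ (X.induce (π ⁻¹' {π y})).dist
          ⟨φv ⟨lam (π x) ip, LadderAux.mem_fiber π (hlamπ (π x) ip)⟩,
            LadderAux.mem_fiber π (hφπ ⟨lam (π x) ip, LadderAux.mem_fiber π (hlamπ (π x) ip)⟩)⟩
          ⟨lam (π y) iq, LadderAux.mem_fiber π (hlamπ (π y) iq)⟩ :=
        LadderAux.dist_le_induce X _ (hfibcon (π y))
          ⟨φv ⟨lam (π x) ip, LadderAux.mem_fiber π (hlamπ (π x) ip)⟩,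
            LadderAux.mem_fiber π (hφπ ⟨lam (π x) ip, LadderAux.mem_fiber π (hlamπ (π x) ip)⟩)⟩
          ⟨lam (π y) iq, LadderAux.mem_fiber π (hlamπ (π y) iq)⟩
      have hsym : (X.induce (π ⁻¹' {π y})).dist
          ⟨φv ⟨lam (π x) ip, LadderAux.mem_fiber π (hlamπ (π x) ip)⟩,
            LadderAux.mem_fiber π (hφπ ⟨lam (π x) ip, LadderAux.mem_fiber π (hlamπ (π x) ip)⟩)⟩
          ⟨lam (π y) iq, LadderAux.mem_fiber π (hlamπ (π y) iq)⟩ =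
          (X.induce (π ⁻¹' {π y})).dist
          ⟨lam (π y) iq, LadderAux.mem_fiber π (hlamπ (π y) iq)⟩
          ⟨φv ⟨lam (π x) ip, LadderAux.mem_fiber π (hlamπ (π x) ip)⟩,
            LadderAux.mem_fiber π (hφπ ⟨lam (π x) ip, LadderAux.mem_fiber π (hlamπ (π x) ip)⟩)⟩ :=
        SimpleGraph.dist_comm
      have hstep1 : X.dist (lam (π x) ip)
          (φv ⟨lam (π x) ip, LadderAux.mem_fiber π (hlamπ (π x) ip)⟩) ≤ 1 :=
        hAdj1 (hφadj ⟨lam (π x) ip, LadderAux.mem_fiber π (hlamπ (π x) ip)⟩)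
      have htr := hXtri (lam (π x) ip)
        (φv ⟨lam (π x) ip, LadderAux.mem_fiber π (hlamπ (π x) ip)⟩) (lam (π y) iq)
      have hCeq : LadderAux.Cfin K δ' μ η =
          LadderAux.Mcr δ' (LadderAux.mu1 μ) (η (2 * K + 1)) (η 2) +
            LadderAux.Rcr2 δ' (LadderAux.mu1 μ) (η (2 * K + 1)) +
            2 * η 1 + LadderAux.cproj δ' + 2 := rfl
      rw [hPx, hPy]
      omega
    · -- same-fiber case
      have hPy' := hPex y
      rw [← hsame] at hPy'
      obtain ⟨iq, hiq, hPy⟩ := hPy'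
      have hminx : ∀ j ≤ fiberDist X π (π x) (s₁ (π x)) (s₂ (π x)),
          (X.induce (π ⁻¹' {π x})).dist ⟨x, LadderAux.mem_fiber π rfl⟩
            ⟨lam (π x) ip, LadderAux.mem_fiber π (hlamπ (π x) ip)⟩ ≤
          (X.induce (π ⁻¹' {π x})).dist ⟨x, LadderAux.mem_fiber π rfl⟩
            ⟨lam (π x) j, LadderAux.mem_fiber π (hlamπ (π x) j)⟩ := by
        intro j hj
        have h := hPmin x j hj
        rw [hPx] at h
        rw [LadderAux.fiberDist_eq X π rfl (hlamπ (π x) ip),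
          LadderAux.fiberDist_eq X π rfl (hlamπ (π x) j)] at h
        exact h
      have hminy : ∀ j ≤ fiberDist X π (π x) (s₁ (π x)) (s₂ (π x)),
          (X.induce (π ⁻¹' {π x})).dist ⟨y, LadderAux.mem_fiber π hsame.symm⟩
            ⟨lam (π x) iq, LadderAux.mem_fiber π (hlamπ (π x) iq)⟩ ≤
          (X.induce (π ⁻¹' {π x})).dist ⟨y, LadderAux.mem_fiber π hsame.symm⟩
            ⟨lam (π x) j, LadderAux.mem_fiber π (hlamπ (π x) j)⟩ := by
        intro j hj
        have h := hPmin y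
        rw [← hsame] at h
        have h2 := h j hj
        rw [hPy] at h2
        rw [LadderAux.fiberDist_eq X π hsame.symm (hlamπ (π x) iq),
          LadderAux.fiberDist_eq X π hsame.symm (hlamπ (π x) j)] at h2
        exact h2
      have hlip := LadderAux.proj_lipschitz (hcg (π x)) hδ' (hlamGeo (π x))
        ⟨x, LadderAux.mem_fiber π rfl⟩ ⟨y, LadderAux.mem_fiber π hsame.symm⟩
        ip iq hip hiq hminx hminy
      -- distance between x and y in the fiber
      have hdxy : (X.induce (π ⁻¹' {π x})).dist ⟨x, LadderAux.mem_fiber π rfl⟩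
          ⟨y, LadderAux.mem_fiber π hsame.symm⟩ ≤ η 1 := by
        have h := hη (π x) x y rfl hsame.symm 1 (hAdj1 hxy)
        rw [LadderAux.fiberDist_eq X π rfl hsame.symm] at h
        exact h
      have hgeod : (X.induce (π ⁻¹' {π x})).dist
          ⟨lam (π x) ip, LadderAux.mem_fiber π (hlamπ (π x) ip)⟩
          ⟨lam (π x) iq, LadderAux.mem_fiber π (hlamπ (π x) iq)⟩ =
          ((ip : ℤ) - (iq : ℤ)).natAbs := by
        have h := hlamgeo (π x) ip iq hip hiq
        rw [LadderAux.fiberDist_eq X π (hlamπ (π x) ip) (hlamπ (π x) iq)] at h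
        exact h
      have hfdle2 : X.dist (lam (π x) ip) (lam (π x) iq) ≤
          (X.induce (π ⁻¹' {π x})).dist
          ⟨lam (π x) ip, LadderAux.mem_fiber π (hlamπ (π x) ip)⟩
          ⟨lam (π x) iq, LadderAux.mem_fiber π (hlamπ (π x) iq)⟩ :=
        LadderAux.dist_le_induce X _ (hfibcon (π x))
          ⟨lam (π x) ip, LadderAux.mem_fiber π (hlamπ (π x) ip)⟩
          ⟨lam (π x) iq, LadderAux.mem_fiber π (hlamπ (π x) iq)⟩
      have hCeq : LadderAux.Cfin K δ' μ η =
          LadderAux.Mcr δ' (LadderAux.mu1 μ) (η (2 * K + 1)) (η 2) +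
            LadderAux.Rcr2 δ' (LadderAux.mu1 μ) (η (2 * K + 1)) +
            2 * η 1 + LadderAux.cproj δ' + 2 := rfl
      rw [hPx, hPy]
      omega
  -- chaining along a geodesic in the total space
  have hmain : ∀ x y : V, X.dist (P x) (P y) ≤
      LadderAux.Cfin K δ' μ η * X.dist x y + LadderAux.Cfin K δ' μ η := by
    intro x y
    obtain ⟨p, hp⟩ := hXconn.exists_walk_length_eq_dist x y
    have key : ∀ i : ℕ, X.dist (P x) (P (p.getVert i)) ≤ LadderAux.Cfin K δ' μ η * i := by
      intro i
      induction i with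
      | zero => rw [p.getVert_zero]; simp [SimpleGraph.dist_self]
      | succ k ih =>
        rcases Nat.lt_or_ge k p.length with hk | hk
        · have hadj := p.adj_getVert_succ hk
          have h1 := hstep (p.getVert k) (p.getVert (k + 1)) hadj
          have h2 := hXtri (P x) (P (p.getVert k)) (P (p.getVert (k + 1)))
          have h3 : LadderAux.Cfin K δ' μ η * (k + 1) =
              LadderAux.Cfin K δ' μ η * k + LadderAux.Cfin K δ' μ η := by ring
          omega
        · rw [p.getVert_of_length_le (by omega : p.length ≤ k + 1)]
          rw [p.getVert_of_length_le hk] at ih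
          have h3 : LadderAux.Cfin K δ' μ η * k ≤ LadderAux.Cfin K δ' μ η * (k + 1) :=
            Nat.mul_le_mul_left _ (by omega)
          omega
    have hkey := key p.length
    rw [p.getVert_length] at hkey
    rw [hp] at hkey
    omega
  exact ⟨hmain, hretr⟩
end
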